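/- Fix N ∈ ℕ. Let Y₀ be a random variable with values in {0,…,N}, independent of (P,R), and let Y₁ be a random variable whose conditional distribution given (Y₀, P, R) = (k, p, r) is that of B₁ + B₂ with B₁, B₂ independent, B₁ ~ Binomial(k, r), B₂ ~ Binomial(N−k, 1−p). Assume Y₁ has the same distribution as Y₀. Write P̄ := 1−P and R̄ := 1−R. Then Var(Y₀) = γ₁N² + γ₂N, where γ₁ = ( E[R̄²](E[P̄])² − 2E[P̄R̄]·E[P̄]·E[R̄] + E[P̄²](E[R̄])² ) / ( (1 − E[(P̄+R̄−1)²]) · (E[P̄] + E[R̄])² ) and γ₂ = ( −E[R̄²]·E[P̄] + 2E[P̄]·E[R̄] − E[P̄²]·E[R̄] ) / ( (1 − E[(P̄+R̄−1)²]) · (E[P̄] + E[R̄]) ); here 1 − E[(P̄+R̄−1)²] > 0 and E[P̄] + E[R̄] > 0 automatically since (P,R) ∈ (0,1)² almost surely. -/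

import Mathlib

/-!
Averaging the conditional law of `Y₁` over the pair `(P, R)`, which is independent of `Y₀`,
turns the model into a Markov chain on `{0, …, N}` with kernel `K k m = E[convPMF N k P R m]`,
and the hypotheses say that the law of `Y₀` is `K`-invariant. The first two moments of `K k ·`
are those of a sum of two independent binomials, i.e. polynomials of degree at most two in `k`
whose coefficients are linear in `E[P̄], E[R̄], E[P̄²], E[R̄²], E[P̄R̄]`. Integrating them against
the invariant law gives `E[Y₀] (E[P̄] + E[R̄]) = N E[P̄]` and a linear equation for `E[Y₀²]` with
leading coefficient `1 - E[(P̄ + R̄ - 1)²]`; solving the two equations yields the variance.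
-/

open MeasureTheory ProbabilityTheory Finset

noncomputable def binomPMF (n : ℕ) (q : ℝ) (j : ℕ) : ℝ :=
  (n.choose j : ℝ) * q ^ j * (1 - q) ^ (n - j)

/-- The pmf at `m` of `B₁ + B₂` with `B₁ ~ Binomial(k, r)` and `B₂ ~ Binomial(N − k, 1 − p)`
independent. -/
noncomputable def convPMF (N k : ℕ) (p r : ℝ) (m : ℕ) : ℝ :=
  ∑ j ∈ Finset.range (m + 1), binomPMF k r j * binomPMF (N - k) (1 - p) (m - j)

theorem sum_range_choose_mul_choose_mul_pow {R : Type*} [CommSemiring R] (n d : ℕ) (x y : R) :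
    ∑ j ∈ range (n + 1), (n.choose j * j.choose d : R) * x ^ j * y ^ (n - j) =
      n.choose d * x ^ d * (x + y) ^ (n - d) := by
  rcases lt_or_ge n d with hnd | hdn
  · refine (sum_eq_zero fun j hj => ?_).trans (by simp [Nat.choose_eq_zero_of_lt hnd])
    simp [Nat.choose_eq_zero_of_lt (show j < d by grind)]
  · rw [show n + 1 = d + (n - d + 1) by omega, sum_range_add, add_pow, mul_sum]
    rw [sum_eq_zero fun j hj => by simp [Nat.choose_eq_zero_of_lt (mem_range.1 hj)], zero_add]
    refine sum_congr rfl fun i hi => ?_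
    have hchoose := Nat.choose_mul (n := n) (k := d + i) (s := d) (by omega)
    rw [Nat.add_sub_cancel_left] at hchoose
    rw [show n - (d + i) = n - d - i by omega, ← Nat.cast_mul, hchoose]
    push_cast
    ring

theorem binomPMF_eq_zero_of_lt {n j : ℕ} (h : n < j) (q : ℝ) : binomPMF n q j = 0 := by
  simp [binomPMF, Nat.choose_eq_zero_of_lt h]

theorem sum_choose_mul_binomPMF (n d : ℕ) (q : ℝ) :
    ∑ j ∈ range (n + 1), (j.choose d : ℝ) * binomPMF n q j = n.choose d * q ^ d := by
  have h := sum_range_choose_mul_choose_mul_pow n d q (1 - q)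
  rw [add_sub_cancel, one_pow, mul_one] at h
  rw [← h]
  exact sum_congr rfl fun j _ => by unfold binomPMF; ring

theorem sum_binomPMF (n : ℕ) (q : ℝ) : ∑ j ∈ range (n + 1), binomPMF n q j = 1 := by
  simpa using sum_choose_mul_binomPMF n 0 q

theorem sum_natCast_mul_binomPMF (n : ℕ) (q : ℝ) :
    ∑ j ∈ range (n + 1), (j : ℝ) * binomPMF n q j = n * q := by
  simpa using sum_choose_mul_binomPMF n 1 q

theorem sum_natCast_sq_mul_binomPMF (n : ℕ) (q : ℝ) :
    ∑ j ∈ range (n + 1), (j : ℝ) ^ 2 * binomPMF n q j = n * q * (1 - q) + (n * q) ^ 2 := by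
  have h (j : ℕ) : (j : ℝ) ^ 2 = 2 * (j.choose 2 : ℝ) + (j.choose 1 : ℝ) := by
    rw [Nat.cast_choose_two, Nat.choose_one_right]
    ring
  simp only [h, add_mul, mul_assoc, sum_add_distrib, ← mul_sum]
  rw [sum_choose_mul_binomPMF, sum_choose_mul_binomPMF, Nat.cast_choose_two, Nat.choose_one_right]
  ring

theorem sum_mul_convPMF {N k : ℕ} (hk : k ≤ N) (p r : ℝ) (f : ℕ → ℝ) :
    ∑ m ∈ range (N + 1), f m * convPMF N k p r m =
      ∑ i ∈ range (k + 1), ∑ j ∈ range (N - k + 1),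
        f (i + j) * (binomPMF k r i * binomPMF (N - k) (1 - p) j) := by
  simp only [convPMF, mul_sum]
  rw [sum_sigma', ← sum_product']
  symm
  refine sum_bij_ne_zero (fun x _ _ => ⟨x.1 + x.2, x.1⟩) ?_ ?_ ?_ ?_
  · intro x hx _
    simp only [mem_product, mem_range] at hx
    simp only [mem_sigma, mem_range]
    omega
  · intro x _ _ y _ _ h
    simp only [Sigma.mk.injEq, heq_eq_eq] at h
    ext <;> omega
  · rintro ⟨m, i⟩ hmi hne
    simp only [mem_sigma, mem_range] at hmi
    simp only [ne_eq, mul_eq_zero, not_or] at hne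
    have hi : i ≤ k := not_lt.1 fun h => hne.2.1 (binomPMF_eq_zero_of_lt h r)
    have hmi' : m - i ≤ N - k := not_lt.1 fun h => hne.2.2 (binomPMF_eq_zero_of_lt h _)
    refine ⟨(i, m - i), ?_, ?_, ?_⟩
    · simp only [mem_product, mem_range]
      omega
    · simpa [show i + (m - i) = m by omega] using hne
    · simp only [Sigma.mk.injEq, heq_eq_eq, and_true]; omega
  · intro x _ _
    simp

theorem sum_natCast_mul_convPMF {N k : ℕ} (hk : k ≤ N) (p r : ℝ) :
    ∑ m ∈ range (N + 1), (m : ℝ) * convPMF N k p r m = k * r + (N - k : ℕ) * (1 - p) := by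
  rw [sum_mul_convPMF hk]
  have h : ∀ i j : ℕ, ((i + j : ℕ) : ℝ) * (binomPMF k r i * binomPMF (N - k) (1 - p) j) =
      (i * binomPMF k r i) * binomPMF (N - k) (1 - p) j
        + binomPMF k r i * (j * binomPMF (N - k) (1 - p) j) := by
    intro i j; push_cast; ring
  simp only [h, sum_add_distrib, ← mul_sum, ← sum_mul, sum_binomPMF, sum_natCast_mul_binomPMF]
  ring

theorem sum_natCast_sq_mul_convPMF {N k : ℕ} (hk : k ≤ N) (p r : ℝ) :
    ∑ m ∈ range (N + 1), (m : ℝ) ^ 2 * convPMF N k p r m =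
      (k * r + (N - k : ℕ) * (1 - p)) ^ 2 + k * r * (1 - r) + (N - k : ℕ) * (1 - p) * p := by
  rw [sum_mul_convPMF hk]
  have h : ∀ i j : ℕ, ((i + j : ℕ) : ℝ) ^ 2 * (binomPMF k r i * binomPMF (N - k) (1 - p) j) =
      (i ^ 2 * binomPMF k r i) * binomPMF (N - k) (1 - p) j
        + 2 * ((i * binomPMF k r i) * (j * binomPMF (N - k) (1 - p) j))
        + binomPMF k r i * (j ^ 2 * binomPMF (N - k) (1 - p) j) := by
    intro i j; push_cast; ring
  simp only [h, sum_add_distrib, ← mul_sum, ← sum_mul, sum_binomPMF, sum_natCast_mul_binomPMF,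
    sum_natCast_sq_mul_binomPMF]
  ring

theorem sum_mul_eq_sum_mul_sum_of_stationary {π : ℕ → ℝ} {K : ℕ → ℕ → ℝ} {s : Finset ℕ}
    (hπ : ∀ m, π m = ∑ k ∈ s, π k * K k m) (f : ℕ → ℝ) :
    ∑ m ∈ s, f m * π m = ∑ k ∈ s, π k * ∑ m ∈ s, f m * K k m := by
  calc ∑ m ∈ s, f m * π m = ∑ m ∈ s, ∑ k ∈ s, π k * (f m * K k m) :=
        sum_congr rfl fun m _ => by rw [hπ m, mul_sum]; exact sum_congr rfl fun _ _ => by ring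
    _ = _ := by rw [sum_comm]; simp_rw [mul_sum]

section Probability

variable {Ω : Type*} [MeasurableSpace Ω] {μ : Measure Ω}

theorem integrable_comp_of_ae_mem_isCompact [IsFiniteMeasure μ] {E : Type*} [TopologicalSpace E]
    [MeasurableSpace E] [OpensMeasurableSpace E] {X : Ω → E} (hX : AEMeasurable X μ) {K : Set E}
    (hK : IsCompact K) (hXK : ∀ᵐ ω ∂μ, X ω ∈ K) {g : E → ℝ} (hg : Continuous g) :
    Integrable (fun ω => g (X ω)) μ := by
  obtain ⟨C, hC⟩ := hK.exists_bound_of_continuousOn hg.continuousOn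
  exact .of_bound (hg.measurable.comp_aemeasurable hX).aestronglyMeasurable C
    (hXK.mono fun ω hω => hC _ hω)

theorem integral_pos_of_ae_pos [NeZero μ] {f : Ω → ℝ} (hf : Integrable f μ)
    (hpos : ∀ᵐ ω ∂μ, 0 < f ω) : 0 < ∫ ω, f ω ∂μ := by
  rw [integral_pos_iff_support_of_nonneg_ae (hpos.mono fun _ h => h.le) hf]
  exact pos_iff_ne_zero.2 (frequently_ae_mem_iff.1 (hpos.mono fun _ h => h.ne').frequently)

theorem integral_comp_eq_sum_measureReal [IsFiniteMeasure μ] {Z : Ω → ℕ} (hZ : Measurable Z)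
    {N : ℕ} (hZN : ∀ ω, Z ω ≤ N) (f : ℕ → ℝ) :
    ∫ ω, f (Z ω) ∂μ = ∑ m ∈ range (N + 1), f m * μ.real (Z ⁻¹' {m}) := by
  have h : ∀ ω, f (Z ω) = ∑ m ∈ range (N + 1), (Z ⁻¹' {m}).indicator (fun _ => f m) ω := by
    intro ω
    rw [sum_eq_single_of_mem (Z ω) (mem_range.2 (Nat.lt_succ_of_le (hZN ω)))]
    · simp
    · intro m _ hm
      exact Set.indicator_of_notMem (Ne.symm hm) _
  simp_rw [h]
  rw [integral_finsetSum _ fun m _ =>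
    (integrable_const _).indicator (hZ (measurableSet_singleton m))]
  simp [integral_indicator_const _ (hZ (measurableSet_singleton _)), mul_comm]

theorem ProbabilityTheory.IndepFun.setIntegral_preimage_eq_mul {β γ : Type*}
    [MeasurableSpace β] [MeasurableSpace γ] {Z : Ω → β} {W : Ω → γ} (hZW : IndepFun Z W μ)
    (hZ : Measurable Z) (hW : AEMeasurable W μ)
    {t : Set β} (ht : MeasurableSet t) {g : γ → ℝ} (hg : Measurable g) :
    ∫ ω in Z ⁻¹' t, g (W ω) ∂μ = μ.real (Z ⁻¹' t) * ∫ ω, g (W ω) ∂μ :=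
  ((IndepFun_iff_Indep Z W μ).1 hZW).setIntegral_eq_mul hZ.comap_le hW ⟨t, ht, rfl⟩
    hg.aestronglyMeasurable

end Probability

section StationaryResampling

variable {Ω : Type*} [MeasurableSpace Ω] {μ : Measure Ω} {P R : Ω → ℝ} {N : ℕ}
  {Y₀ Y₁ : Ω → ℕ}

/-- The transition probability `k → m` of `Y`, once the fresh `(P, R)` is averaged out. -/
noncomputable def resamplingKernel (μ : Measure Ω) (P R : Ω → ℝ) (N k m : ℕ) : ℝ :=
  ∫ ω, convPMF N k (P ω) (R ω) m ∂μ

theorem integrable_comp_of_ae_mem_Ioo [IsFiniteMeasure μ] (hP : Measurable P) (hR : Measurable R)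
    (hPR : ∀ᵐ ω ∂μ, P ω ∈ Set.Ioo (0 : ℝ) 1 ∧ R ω ∈ Set.Ioo (0 : ℝ) 1) {g : ℝ × ℝ → ℝ}
    (hg : Continuous g) : Integrable (fun ω => g (P ω, R ω)) μ :=
  integrable_comp_of_ae_mem_isCompact (K := Set.Icc 0 1 ×ˢ Set.Icc 0 1)
    (hP.prodMk hR).aemeasurable (isCompact_Icc.prod isCompact_Icc)
    (hPR.mono fun _ h => ⟨Set.Ioo_subset_Icc_self h.1, Set.Ioo_subset_Icc_self h.2⟩) hg

variable [IsProbabilityMeasure μ]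

theorem sum_mul_resamplingKernel (hP : Measurable P) (hR : Measurable R)
    (hPR : ∀ᵐ ω ∂μ, P ω ∈ Set.Ioo (0 : ℝ) 1 ∧ R ω ∈ Set.Ioo (0 : ℝ) 1) (k : ℕ) (f : ℕ → ℝ) :
    ∑ m ∈ range (N + 1), f m * resamplingKernel μ P R N k m =
      ∫ ω, ∑ m ∈ range (N + 1), f m * convPMF N k (P ω) (R ω) m ∂μ := by
  simp only [resamplingKernel, ← integral_const_mul]
  refine (integral_finsetSum _ fun m _ => Integrable.const_mul ?_ _).symm
  exact integrable_comp_of_ae_mem_Ioo hP hR hPR (g := fun w => convPMF N k w.1 w.2 m)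
    (by unfold convPMF binomPMF; fun_prop)

theorem integral_quadratic_eq (hP : Measurable P) (hR : Measurable R)
    (hPR : ∀ᵐ ω ∂μ, P ω ∈ Set.Ioo (0 : ℝ) 1 ∧ R ω ∈ Set.Ioo (0 : ℝ) 1) (c₀ c₁ c₂ c₃ c₄ c₅ : ℝ) :
    ∫ ω, (c₀ + c₁ * (1 - P ω) + c₂ * (1 - R ω) + c₃ * (1 - P ω) ^ 2 + c₄ * (1 - R ω) ^ 2
        + c₅ * ((1 - P ω) * (1 - R ω))) ∂μ =
      c₀ + c₁ * (∫ ω, (1 - P ω) ∂μ) + c₂ * (∫ ω, (1 - R ω) ∂μ) + c₃ * (∫ ω, (1 - P ω) ^ 2 ∂μ)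
        + c₄ * (∫ ω, (1 - R ω) ^ 2 ∂μ) + c₅ * ∫ ω, (1 - P ω) * (1 - R ω) ∂μ := by
  have hP' : Integrable (fun ω => 1 - P ω) μ :=
    integrable_comp_of_ae_mem_Ioo hP hR hPR (g := fun w => 1 - w.1) (by fun_prop)
  have hR' : Integrable (fun ω => 1 - R ω) μ :=
    integrable_comp_of_ae_mem_Ioo hP hR hPR (g := fun w => 1 - w.2) (by fun_prop)
  have hP2 : Integrable (fun ω => (1 - P ω) ^ 2) μ :=
    integrable_comp_of_ae_mem_Ioo hP hR hPR (g := fun w => (1 - w.1) ^ 2) (by fun_prop)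
  have hR2 : Integrable (fun ω => (1 - R ω) ^ 2) μ :=
    integrable_comp_of_ae_mem_Ioo hP hR hPR (g := fun w => (1 - w.2) ^ 2) (by fun_prop)
  have hPR' : Integrable (fun ω => (1 - P ω) * (1 - R ω)) μ :=
    integrable_comp_of_ae_mem_Ioo hP hR hPR (g := fun w => (1 - w.1) * (1 - w.2)) (by fun_prop)
  simp (disch := fun_prop) only [integral_add, integral_const_mul, integral_const]
  simp

theorem sum_natCast_mul_resamplingKernel (hP : Measurable P) (hR : Measurable R)
    (hPR : ∀ᵐ ω ∂μ, P ω ∈ Set.Ioo (0 : ℝ) 1 ∧ R ω ∈ Set.Ioo (0 : ℝ) 1) {k : ℕ} (hk : k ≤ N) :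
    ∑ m ∈ range (N + 1), (m : ℝ) * resamplingKernel μ P R N k m =
      k * (1 - ∫ ω, (1 - R ω) ∂μ) + (N - k) * ∫ ω, (1 - P ω) ∂μ := by
  rw [sum_mul_resamplingKernel hP hR hPR]
  calc _ = ∫ ω, (k + (N - k) * (1 - P ω) + (-k) * (1 - R ω) + 0 * (1 - P ω) ^ 2
        + 0 * (1 - R ω) ^ 2 + 0 * ((1 - P ω) * (1 - R ω))) ∂μ := by
        congr 1 with ω
        rw [sum_natCast_mul_convPMF hk, Nat.cast_sub hk]
        ring
    _ = _ := by rw [integral_quadratic_eq hP hR hPR]; ring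

theorem sum_natCast_sq_mul_resamplingKernel (hP : Measurable P) (hR : Measurable R)
    (hPR : ∀ᵐ ω ∂μ, P ω ∈ Set.Ioo (0 : ℝ) 1 ∧ R ω ∈ Set.Ioo (0 : ℝ) 1) {k : ℕ} (hk : k ≤ N) :
    ∑ m ∈ range (N + 1), (m : ℝ) ^ 2 * resamplingKernel μ P R N k m =
      k ^ 2 * (1 - 2 * ∫ ω, (1 - R ω) ∂μ + ∫ ω, (1 - R ω) ^ 2 ∂μ)
        + 2 * k * (N - k) * (∫ ω, (1 - P ω) ∂μ - ∫ ω, (1 - P ω) * (1 - R ω) ∂μ)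
        + (N - k) ^ 2 * ∫ ω, (1 - P ω) ^ 2 ∂μ
        + k * (∫ ω, (1 - R ω) ∂μ - ∫ ω, (1 - R ω) ^ 2 ∂μ)
        + (N - k) * (∫ ω, (1 - P ω) ∂μ - ∫ ω, (1 - P ω) ^ 2 ∂μ) := by
  rw [sum_mul_resamplingKernel hP hR hPR]
  calc _ = ∫ ω, (k ^ 2 + (2 * k * (N - k) + (N - k)) * (1 - P ω) + (k - 2 * k ^ 2) * (1 - R ω)
        + ((N - k) ^ 2 - (N - k)) * (1 - P ω) ^ 2 + (k ^ 2 - k) * (1 - R ω) ^ 2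
        + (-2 * k * (N - k)) * ((1 - P ω) * (1 - R ω))) ∂μ := by
        congr 1 with ω
        rw [sum_natCast_sq_mul_convPMF hk, Nat.cast_sub hk]
        ring
    _ = _ := by rw [integral_quadratic_eq hP hR hPR]; ring

theorem integral_add_sub_one_sq (hP : Measurable P) (hR : Measurable R)
    (hPR : ∀ᵐ ω ∂μ, P ω ∈ Set.Ioo (0 : ℝ) 1 ∧ R ω ∈ Set.Ioo (0 : ℝ) 1) :
    ∫ ω, ((1 - P ω) + (1 - R ω) - 1) ^ 2 ∂μ =
      1 - 2 * (∫ ω, (1 - P ω) ∂μ) - 2 * (∫ ω, (1 - R ω) ∂μ) + (∫ ω, (1 - P ω) ^ 2 ∂μ)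
        + (∫ ω, (1 - R ω) ^ 2 ∂μ) + 2 * ∫ ω, (1 - P ω) * (1 - R ω) ∂μ := by
  calc _ = ∫ ω, (1 + (-2) * (1 - P ω) + (-2) * (1 - R ω) + 1 * (1 - P ω) ^ 2
        + 1 * (1 - R ω) ^ 2 + 2 * ((1 - P ω) * (1 - R ω))) ∂μ := by
        congr 1 with ω
        ring
    _ = _ := by rw [integral_quadratic_eq hP hR hPR]; ring

theorem one_sub_integral_add_sub_one_sq_pos (hP : Measurable P) (hR : Measurable R)
    (hPR : ∀ᵐ ω ∂μ, P ω ∈ Set.Ioo (0 : ℝ) 1 ∧ R ω ∈ Set.Ioo (0 : ℝ) 1) :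
    0 < 1 - ∫ ω, ((1 - P ω) + (1 - R ω) - 1) ^ 2 ∂μ := by
  have hsq : Integrable (fun ω => ((1 - P ω) + (1 - R ω) - 1) ^ 2) μ :=
    integrable_comp_of_ae_mem_Ioo hP hR hPR (g := fun w => ((1 - w.1) + (1 - w.2) - 1) ^ 2)
      (by fun_prop)
  have hpos : 0 < ∫ ω, (1 - ((1 - P ω) + (1 - R ω) - 1) ^ 2) ∂μ :=
    integral_pos_of_ae_pos ((integrable_const 1).sub hsq) <|
      hPR.mono fun ω ⟨⟨hp₀, hp₁⟩, hr₀, hr₁⟩ => by nlinarith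
  rwa [integral_sub (integrable_const 1) hsq, integral_const, probReal_univ, one_smul] at hpos

theorem integral_one_sub_add_integral_one_sub_pos (hP : Measurable P) (hR : Measurable R)
    (hPR : ∀ᵐ ω ∂μ, P ω ∈ Set.Ioo (0 : ℝ) 1 ∧ R ω ∈ Set.Ioo (0 : ℝ) 1) :
    0 < (∫ ω, (1 - P ω) ∂μ) + ∫ ω, (1 - R ω) ∂μ :=
  add_pos
    (integral_pos_of_ae_pos (integrable_comp_of_ae_mem_Ioo hP hR hPR (g := fun w => 1 - w.1)
      (by fun_prop)) (hPR.mono fun _ h => sub_pos.2 h.1.2))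
    (integral_pos_of_ae_pos (integrable_comp_of_ae_mem_Ioo hP hR hPR (g := fun w => 1 - w.2)
      (by fun_prop)) (hPR.mono fun _ h => sub_pos.2 h.2.2))

theorem measureReal_eq_sum_mul_resamplingKernel (hP : Measurable P) (hR : Measurable R)
    (hY₀ : Measurable Y₀) (hY₁ : Measurable Y₁) (hY₀N : ∀ ω, Y₀ ω ≤ N)
    (hindep : IndepFun Y₀ (fun ω => (P ω, R ω)) μ)
    (hcond : ∀ (m : ℕ) (s : Set (ℕ × ℝ × ℝ)), MeasurableSet s →
      (μ {ω | Y₁ ω = m ∧ (Y₀ ω, P ω, R ω) ∈ s}).toReal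
        = ∫ ω in {ω | (Y₀ ω, P ω, R ω) ∈ s}, convPMF N (Y₀ ω) (P ω) (R ω) m ∂μ)
    (hstat : Measure.map Y₁ μ = Measure.map Y₀ μ) (m : ℕ) :
    μ.real (Y₀ ⁻¹' {m}) =
      ∑ k ∈ range (N + 1), μ.real (Y₀ ⁻¹' {k}) * resamplingKernel μ P R N k m := by
  have hfiber (k : ℕ) : MeasurableSet (Y₀ ⁻¹' {k}) := hY₀ (measurableSet_singleton k)
  calc μ.real (Y₀ ⁻¹' {m}) = μ.real (Y₁ ⁻¹' {m}) := by
        rw [← map_measureReal_apply hY₀ (measurableSet_singleton m), ← hstat,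
          map_measureReal_apply hY₁ (measurableSet_singleton m)]
    _ = ∑ k ∈ range (N + 1), μ.real (Y₀ ⁻¹' {k} ∩ Y₁ ⁻¹' {m}) := by
        have huniv : Y₀ ⁻¹' ↑(range (N + 1)) = Set.univ :=
          Set.eq_univ_of_forall fun ω => by simpa [Nat.lt_succ_iff] using hY₀N ω
        simp_rw [← measureReal_restrict_apply (hfiber _)]
        rw [sum_measureReal_preimage_singleton _ fun k _ => hfiber k, huniv,
          measureReal_restrict_apply_univ]
    _ = ∑ k ∈ range (N + 1), ∫ ω in Y₀ ⁻¹' {k}, convPMF N k (P ω) (R ω) m ∂μ := by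
        refine sum_congr rfl fun k _ => ?_
        have h := hcond m ({k} ×ˢ Set.univ) ((measurableSet_singleton k).prod MeasurableSet.univ)
        simp only [Set.mem_prod, Set.mem_singleton_iff, Set.mem_univ, and_true] at h
        rw [measureReal_def, Set.inter_comm]
        refine h.trans (setIntegral_congr_fun (hfiber k) fun ω hω => ?_)
        rw [show Y₀ ω = k from hω]
    _ = _ := by
        refine sum_congr rfl fun k _ => ?_
        exact hindep.setIntegral_preimage_eq_mul hY₀ (hP.prodMk hR).aemeasurable
          (measurableSet_singleton k) (g := fun w => convPMF N k w.1 w.2 m)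
          (by unfold convPMF binomPMF; fun_prop)

theorem integral_comp_eq_of_sum_mul_resamplingKernel_eq (hY₀ : Measurable Y₀)
    (hY₀N : ∀ ω, Y₀ ω ≤ N)
    (hπ : ∀ m, μ.real (Y₀ ⁻¹' {m}) =
      ∑ k ∈ range (N + 1), μ.real (Y₀ ⁻¹' {k}) * resamplingKernel μ P R N k m)
    {f : ℕ → ℝ} {α β γ : ℝ}
    (hf : ∀ k ≤ N,
      ∑ m ∈ range (N + 1), f m * resamplingKernel μ P R N k m = α * k ^ 2 + β * k + γ) :
    ∫ ω, f (Y₀ ω) ∂μ = α * (∫ ω, (Y₀ ω : ℝ) ^ 2 ∂μ) + β * (∫ ω, (Y₀ ω : ℝ) ∂μ) + γ := by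
  have hmass := integral_comp_eq_sum_measureReal (μ := μ) hY₀ hY₀N
  have h₀ : ∑ k ∈ range (N + 1), μ.real (Y₀ ⁻¹' {k}) = 1 := by
    simpa using (hmass fun _ => 1).symm
  rw [hmass (fun m => (m : ℝ) ^ 2), hmass (fun m => (m : ℝ)),
    (hmass f).trans (sum_mul_eq_sum_mul_sum_of_stationary hπ f), ← mul_one γ, ← h₀, mul_sum,
    mul_sum, mul_sum, ← sum_add_distrib, ← sum_add_distrib]
  refine sum_congr rfl fun k hk => ?_
  rw [hf k (Nat.lt_succ_iff.1 (mem_range.1 hk))]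
  ring

theorem integral_natCast_eq_of_stationary (hP : Measurable P) (hR : Measurable R)
    (hPR : ∀ᵐ ω ∂μ, P ω ∈ Set.Ioo (0 : ℝ) 1 ∧ R ω ∈ Set.Ioo (0 : ℝ) 1)
    (hY₀ : Measurable Y₀) (hY₀N : ∀ ω, Y₀ ω ≤ N)
    (hπ : ∀ m, μ.real (Y₀ ⁻¹' {m}) =
      ∑ k ∈ range (N + 1), μ.real (Y₀ ⁻¹' {k}) * resamplingKernel μ P R N k m) :
    ∫ ω, (Y₀ ω : ℝ) ∂μ =
      (1 - ∫ ω, (1 - P ω) ∂μ - ∫ ω, (1 - R ω) ∂μ) * (∫ ω, (Y₀ ω : ℝ) ∂μ)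
        + N * ∫ ω, (1 - P ω) ∂μ := by
  have h := integral_comp_eq_of_sum_mul_resamplingKernel_eq hY₀ hY₀N hπ
    (f := fun m => (m : ℝ)) (α := 0) (β := 1 - ∫ ω, (1 - P ω) ∂μ - ∫ ω, (1 - R ω) ∂μ)
    (γ := N * ∫ ω, (1 - P ω) ∂μ) fun k hk => by
      rw [sum_natCast_mul_resamplingKernel hP hR hPR hk]
      ring
  linear_combination h

theorem integral_natCast_sq_eq_of_stationary (hP : Measurable P) (hR : Measurable R)
    (hPR : ∀ᵐ ω ∂μ, P ω ∈ Set.Ioo (0 : ℝ) 1 ∧ R ω ∈ Set.Ioo (0 : ℝ) 1)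
    (hY₀ : Measurable Y₀) (hY₀N : ∀ ω, Y₀ ω ≤ N)
    (hπ : ∀ m, μ.real (Y₀ ⁻¹' {m}) =
      ∑ k ∈ range (N + 1), μ.real (Y₀ ⁻¹' {k}) * resamplingKernel μ P R N k m) :
    ∫ ω, (Y₀ ω : ℝ) ^ 2 ∂μ =
      (1 - 2 * (∫ ω, (1 - R ω) ∂μ) + (∫ ω, (1 - R ω) ^ 2 ∂μ)
          - 2 * ((∫ ω, (1 - P ω) ∂μ) - ∫ ω, (1 - P ω) * (1 - R ω) ∂μ)
          + ∫ ω, (1 - P ω) ^ 2 ∂μ) * (∫ ω, (Y₀ ω : ℝ) ^ 2 ∂μ)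
        + (2 * N * ((∫ ω, (1 - P ω) ∂μ) - ∫ ω, (1 - P ω) * (1 - R ω) ∂μ)
          - 2 * N * (∫ ω, (1 - P ω) ^ 2 ∂μ)
          + ((∫ ω, (1 - R ω) ∂μ) - ∫ ω, (1 - R ω) ^ 2 ∂μ)
          - ((∫ ω, (1 - P ω) ∂μ) - ∫ ω, (1 - P ω) ^ 2 ∂μ)) * (∫ ω, (Y₀ ω : ℝ) ∂μ)
        + (N ^ 2 * (∫ ω, (1 - P ω) ^ 2 ∂μ)
          + N * ((∫ ω, (1 - P ω) ∂μ) - ∫ ω, (1 - P ω) ^ 2 ∂μ)) :=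
  integral_comp_eq_of_sum_mul_resamplingKernel_eq hY₀ hY₀N hπ (f := fun m => (m : ℝ) ^ 2)
    fun k hk => by
      rw [sum_natCast_sq_mul_resamplingKernel hP hR hPR hk]
      ring

end StationaryResampling

theorem variance_eq_of_moment_equations {N a b A B D c m₁ m₂ : ℝ} (hc : 1 - c ≠ 0)
    (hab : a + b ≠ 0) (hcab : c = 1 - 2 * a - 2 * b + A + B + 2 * D)
    (h₁ : m₁ = (1 - a - b) * m₁ + N * a)
    (h₂ : m₂ = (1 - 2 * b + B - 2 * (a - D) + A) * m₂
      + (2 * N * (a - D) - 2 * N * A + (b - B) - (a - A)) * m₁ + (N ^ 2 * A + N * (a - A))) :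
    m₂ - m₁ ^ 2 = (B * a ^ 2 - 2 * D * a * b + A * b ^ 2) / ((1 - c) * (a + b) ^ 2) * N ^ 2
      + (-B * a + 2 * a * b - A * b) / ((1 - c) * (a + b)) * N := by
  have hm₁ : m₁ = N * a / (a + b) := by rw [eq_div_iff hab]; linear_combination h₁
  have hm₂ : m₂ = ((2 * N * (a - D) - 2 * N * A + (b - B) - (a - A)) * m₁
      + (N ^ 2 * A + N * (a - A))) / (1 - c) := by
    rw [eq_div_iff hc, hcab]; linear_combination h₂
  rw [hm₂, hm₁]
  field_simp
  rw [hcab]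
  ring

/-- In the stationary resampling model, with `P̄ := 1 − P` and `R̄ := 1 − R`,
`Var(Y₀) = γ₁N² + γ₂N` with the stated coefficients `γ₁, γ₂`; moreover
`1 − E[(P̄ + R̄ − 1)²] > 0` and `E[P̄] + E[R̄] > 0`. -/
theorem stmt_17
    {Ω : Type*} [MeasurableSpace Ω] (μ : Measure Ω) [IsProbabilityMeasure μ]
    (P R : Ω → ℝ) (hP : Measurable P) (hR : Measurable R)
    (hPR : ∀ᵐ ω ∂μ, P ω ∈ Set.Ioo (0 : ℝ) 1 ∧ R ω ∈ Set.Ioo (0 : ℝ) 1)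
    (N : ℕ) (Y₀ Y₁ : Ω → ℕ) (hY₀ : Measurable Y₀) (hY₁ : Measurable Y₁)
    (hY₀N : ∀ ω, Y₀ ω ≤ N)
    (hindep : IndepFun Y₀ (fun ω => (P ω, R ω)) μ)
    (hcond : ∀ (m : ℕ) (s : Set (ℕ × ℝ × ℝ)), MeasurableSet s →
      (μ {ω | Y₁ ω = m ∧ (Y₀ ω, P ω, R ω) ∈ s}).toReal
        = ∫ ω in {ω | (Y₀ ω, P ω, R ω) ∈ s}, convPMF N (Y₀ ω) (P ω) (R ω) m ∂μ)
    (hstat : Measure.map Y₁ μ = Measure.map Y₀ μ) :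
    0 < 1 - ∫ ω, ((1 - P ω) + (1 - R ω) - 1) ^ 2 ∂μ ∧
    0 < (∫ ω, (1 - P ω) ∂μ) + ∫ ω, (1 - R ω) ∂μ ∧
    variance (fun ω => (Y₀ ω : ℝ)) μ
      = (((∫ ω, (1 - R ω) ^ 2 ∂μ) * (∫ ω, (1 - P ω) ∂μ) ^ 2
            - 2 * (∫ ω, (1 - P ω) * (1 - R ω) ∂μ) * (∫ ω, (1 - P ω) ∂μ) * (∫ ω, (1 - R ω) ∂μ)
            + (∫ ω, (1 - P ω) ^ 2 ∂μ) * (∫ ω, (1 - R ω) ∂μ) ^ 2)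
          / ((1 - ∫ ω, ((1 - P ω) + (1 - R ω) - 1) ^ 2 ∂μ)
              * ((∫ ω, (1 - P ω) ∂μ) + ∫ ω, (1 - R ω) ∂μ) ^ 2)) * (N : ℝ) ^ 2
        + ((-(∫ ω, (1 - R ω) ^ 2 ∂μ) * (∫ ω, (1 - P ω) ∂μ)
              + 2 * (∫ ω, (1 - P ω) ∂μ) * (∫ ω, (1 - R ω) ∂μ)
              - (∫ ω, (1 - P ω) ^ 2 ∂μ) * (∫ ω, (1 - R ω) ∂μ))
            / ((1 - ∫ ω, ((1 - P ω) + (1 - R ω) - 1) ^ 2 ∂μ)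
                * ((∫ ω, (1 - P ω) ∂μ) + ∫ ω, (1 - R ω) ∂μ))) * (N : ℝ) := by
  have hc := one_sub_integral_add_sub_one_sq_pos hP hR hPR (μ := μ)
  have hab := integral_one_sub_add_integral_one_sub_pos hP hR hPR (μ := μ)
  have hπ := measureReal_eq_sum_mul_resamplingKernel hP hR hY₀ hY₁ hY₀N hindep hcond hstat
  have hY₀L2 : MemLp (fun ω => (Y₀ ω : ℝ)) 2 μ :=
    .of_bound (by fun_prop) N (ae_of_all _ fun ω => by simpa using hY₀N ω)
  refine ⟨hc, hab, ?_⟩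
  rw [variance_eq_sub hY₀L2]
  exact variance_eq_of_moment_equations hc.ne' hab.ne' (integral_add_sub_one_sq hP hR hPR)
    (integral_natCast_eq_of_stationary hP hR hPR hY₀ hY₀N hπ)
    (integral_natCast_sq_eq_of_stationary hP hR hPR hY₀ hY₀N hπ)
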